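/- Let W and A be measurable spaces, μ̄ a probability measure on W, μ_n := μ̄^{⊗n} and μ_m := μ̄^{⊗m} the corresponding i.i.d. database distributions with m ≤ n, and F : W^m → A a measurable query. Let 𝒯_{n,m} be the uniform distribution on injective templates τ : Fin m → Fin n (sampling without replacement). Then for every ε ≥ 0, every index j ∈ {1,…,n} and all v, w ∈ W: Δ_{ε'}( Σ_τ 𝒯_{n,m}(τ)·(F∘SAMP_τ)_* (μ_n)_{j,v} , Σ_τ 𝒯_{n,m}(τ)·(F∘SAMP_τ)_* (μ_n)_{j,w} ) ≤ (m/n)·Φ_{μ_m,F}(ε), where ε' := log(1 + (m/n)·(e^ε − 1)). -/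
import Mathlib


open MeasureTheory Real
open scoped ENNReal

noncomputable section

/-- Hockey-stick divergence / privacy curve `Δ_ε(μ,ν)`. -/
def hsDiv {A : Type*} [MeasurableSpace A] (ε : ℝ) (μ ν : Measure A) : ℝ :=
  ⨆ S : {S : Set A // MeasurableSet S}, ((μ S.1).toReal - Real.exp ε * (ν S.1).toReal)

/-- Subsampling map induced by a template. -/
def SAMP {W : Type*} {n m : ℕ} (τ : Fin m → Fin n) (x : Fin n → W) : Fin m → W :=
  fun i => x (τ i)

/-- Product measure with `j`-th factor replaced by the Dirac measure at `v`. -/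
def fixEntry {W : Type*} [MeasurableSpace W] {n : ℕ} (μbar : Fin n → Measure W)
    (j : Fin n) (v : W) : Measure (Fin n → W) :=
  Measure.pi (Function.update μbar j (Measure.dirac v))

open Classical in
/-- Sampling privacy curve `SPC^j` : conditional expectation over templates containing `j`. -/
def SPCj {W A : Type*} [MeasurableSpace W] [MeasurableSpace A] {n m : ℕ}
    (F : (Fin m → W) → A) (μbar : Fin n → Measure W)
    (𝒯 : (Fin m → Fin n) → ℝ≥0∞) (j : Fin n) (ε : ℝ) : ℝ :=
  (∑ τ : Fin m → Fin n, if j ∈ Set.range τ then (𝒯 τ).toReal *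
      (⨆ v : W, ⨆ w : W, hsDiv ε (Measure.map (fun x => F (SAMP τ x)) (fixEntry μbar j v))
        (Measure.map (fun x => F (SAMP τ x)) (fixEntry μbar j w))) else 0) /
  (∑ τ : Fin m → Fin n, if j ∈ Set.range τ then (𝒯 τ).toReal else 0)

open Classical in
/-- Uniform distribution on injective templates (sampling without replacement). -/
def uniformInj (n m : ℕ) : (Fin m → Fin n) → ℝ≥0∞ :=
  fun τ => if Function.Injective τ then
    ((Finset.univ.filter (fun σ : Fin m → Fin n => Function.Injective σ)).card : ℝ≥0∞)⁻¹ else 0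

open Classical in
/-- Conditioning of a distribution on templates to an event. -/
def condDist {n m : ℕ} (𝒯 : (Fin m → Fin n) → ℝ≥0∞) (E : Set (Fin m → Fin n)) :
    (Fin m → Fin n) → ℝ≥0∞ :=
  fun τ => if τ ∈ E then 𝒯 τ / (∑ σ : Fin m → Fin n, if σ ∈ E then 𝒯 σ else 0) else 0

/-- The increasing enumeration of a finite set of indices, as a sampling template. -/
def poissonTemplate {n : ℕ} (s : Finset (Fin n)) : Fin s.card → Fin n :=
  fun i => (s.orderIsoOfFin rfl i : Fin n)

/-- Statistical privacy curve of a query. -/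
def Phi {W A : Type*} [MeasurableSpace W] [MeasurableSpace A] {k : ℕ}
    (μbar : Fin k → Measure W) (F : (Fin k → W) → A) (ε : ℝ) : ℝ :=
  ⨆ j : Fin k, ⨆ v : W, ⨆ w : W,
    hsDiv ε (Measure.map F (fixEntry μbar j v)) (Measure.map F (fixEntry μbar j w))

/-- trade-off function -/
def tradeOff {A : Type*} [MeasurableSpace A] (P Q : Measure A) (α : ℝ) : ℝ :=
  sInf { y | ∃ S : Set A, MeasurableSet S ∧ (P Sᶜ).toReal ≤ α ∧ y = (Q S).toReal }

/-- total variation distance -/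
def tvDist {A : Type*} [MeasurableSpace A] (μ ν : Measure A) : ℝ :=
  ⨆ S : {S : Set A // MeasurableSet S}, |(μ S.1).toReal - (ν S.1).toReal|

/-- support of a measure -/
def msupport {X : Type*} [TopologicalSpace X] [MeasurableSpace X] (μ : Measure X) : Set X :=
  {x | ∀ U : Set X, IsOpen U → x ∈ U → 0 < μ U}

/-- τ ≈_j σ -/
def ApproxAt {n m : ℕ} (j : Fin n) (τ σ : Fin m → Fin n) : Prop :=
  ∀ i, (τ i ≠ j → σ i = τ i) ∧ (τ i = j → σ i ≠ j)

/-- F-samplable -/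
def FSamplable {W : Type*} [MeasurableSpace W] {n m : ℕ}
    (μbar : Fin n → Measure W) (F : (Fin m → W) → ℝ) : Prop :=
  ∀ (τ σ : Fin m → Fin n) (j : Fin n) (v w : W) (ε : ℝ), 0 ≤ ε →
    ∃ S : Set ℝ, ((∃ a, S = Set.Iic a) ∨ (∃ a, S = Set.Ici a) ∨ S = ∅) ∧
      ((Measure.map (fun x => F (SAMP τ x)) (fixEntry μbar j v)) S).toReal -
        Real.exp ε * ((Measure.map (fun x => F (SAMP σ x)) (fixEntry μbar j w)) S).toReal =
      hsDiv ε (Measure.map (fun x => F (SAMP τ x)) (fixEntry μbar j v))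
        (Measure.map (fun x => F (SAMP σ x)) (fixEntry μbar j w))

lemma toReal_prob_le_one {A : Type*} [MeasurableSpace A] {μ : Measure A}
    [IsProbabilityMeasure μ] (S : Set A) : (μ S).toReal ≤ 1 := by
  calc (μ S).toReal ≤ (μ Set.univ).toReal :=
        ENNReal.toReal_mono (by simp) (measure_mono (Set.subset_univ S))
    _ = 1 := by simp

lemma hsDiv_le_of_forall {A : Type*} [MeasurableSpace A] {ε : ℝ} {μ ν : Measure A} {c : ℝ}
    (hc : 0 ≤ c)
    (h : ∀ S : Set A, MeasurableSet S → (μ S).toReal - Real.exp ε * (ν S).toReal ≤ c) :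
    hsDiv ε μ ν ≤ c :=
  Real.iSup_le (fun S => h S.1 S.2) hc

lemma hsDiv_nonneg {A : Type*} [MeasurableSpace A] {ε : ℝ} {μ ν : Measure A} :
    0 ≤ hsDiv ε μ ν :=
  Real.iSup_nonneg' ⟨⟨(∅ : Set A), MeasurableSet.empty⟩, by simp⟩

lemma bddAbove_hsDiv {A : Type*} [MeasurableSpace A] {ε : ℝ} {μ ν : Measure A}
    [IsProbabilityMeasure μ] :
    BddAbove (Set.range fun S : {S : Set A // MeasurableSet S} =>
      ((μ S.1).toReal - Real.exp ε * (ν S.1).toReal)) := by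
  refine ⟨1, ?_⟩
  rintro x ⟨S, rfl⟩
  have h1 : (μ S.1).toReal ≤ 1 := toReal_prob_le_one _
  have h2 : 0 ≤ Real.exp ε * (ν S.1).toReal := by positivity
  show (μ S.1).toReal - Real.exp ε * (ν S.1).toReal ≤ 1
  linarith

lemma le_hsDiv {A : Type*} [MeasurableSpace A] {ε : ℝ} {μ ν : Measure A}
    [IsProbabilityMeasure μ] {S : Set A} (hS : MeasurableSet S) :
    (μ S).toReal - Real.exp ε * (ν S).toReal ≤ hsDiv ε μ ν :=
  le_ciSup bddAbove_hsDiv (⟨S, hS⟩ : {S : Set A // MeasurableSet S})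

lemma hsDiv_le_one {A : Type*} [MeasurableSpace A] {ε : ℝ} {μ ν : Measure A}
    [IsProbabilityMeasure μ] : hsDiv ε μ ν ≤ 1 := by
  refine hsDiv_le_of_forall zero_le_one fun S hS => ?_
  have h1 : (μ S).toReal ≤ 1 := toReal_prob_le_one _
  have h2 : 0 ≤ Real.exp ε * (ν S).toReal := by positivity
  linarith

lemma isProbabilityMeasure_fixEntry {W : Type*} [MeasurableSpace W] {n : ℕ}
    (μbar : Fin n → Measure W) [∀ i, IsProbabilityMeasure (μbar i)] (j : Fin n) (v : W) :
    IsProbabilityMeasure (fixEntry μbar j v) := by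
  have : ∀ i, IsProbabilityMeasure (Function.update μbar j (Measure.dirac v) i) := by
    intro i
    rcases eq_or_ne i j with rfl | h
    · simp only [Function.update_self]; infer_instance
    · simp only [Function.update_of_ne h]; infer_instance
  unfold fixEntry
  infer_instance

lemma hsDiv_le_Phi {W A : Type*} [MeasurableSpace W] [MeasurableSpace A] {k : ℕ}
    (ν : Measure W) [IsProbabilityMeasure ν] {F : (Fin k → W) → A} (hF : Measurable F)
    (ε : ℝ) (i : Fin k) (v w : W) :
    hsDiv ε (Measure.map F (fixEntry (fun _ => ν) i v))
      (Measure.map F (fixEntry (fun _ => ν) i w)) ≤ Phi (fun _ => ν) F ε := by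
  have hprob : ∀ (j : Fin k) (u : W),
      IsProbabilityMeasure (Measure.map F (fixEntry (fun _ : Fin k => ν) j u)) := by
    intro j u
    haveI := isProbabilityMeasure_fixEntry (fun _ : Fin k => ν) j u
    exact Measure.isProbabilityMeasure_map hF.aemeasurable
  have h1 : ∀ (j : Fin k) (a b : W),
      hsDiv ε (Measure.map F (fixEntry (fun _ => ν) j a))
        (Measure.map F (fixEntry (fun _ => ν) j b)) ≤ 1 := by
    intro j a b; haveI := hprob j a; exact hsDiv_le_one
  calc hsDiv ε (Measure.map F (fixEntry (fun _ => ν) i v))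
        (Measure.map F (fixEntry (fun _ => ν) i w))
      ≤ ⨆ b : W, hsDiv ε (Measure.map F (fixEntry (fun _ => ν) i v))
          (Measure.map F (fixEntry (fun _ => ν) i b)) :=
        le_ciSup (f := fun b : W => hsDiv ε (Measure.map F (fixEntry (fun _ => ν) i v))
          (Measure.map F (fixEntry (fun _ => ν) i b)))
          ⟨1, by rintro x ⟨b, rfl⟩; exact h1 i v b⟩ w
    _ ≤ ⨆ a : W, ⨆ b : W, hsDiv ε (Measure.map F (fixEntry (fun _ => ν) i a))
          (Measure.map F (fixEntry (fun _ => ν) i b)) :=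
        le_ciSup (f := fun a : W => ⨆ b : W, hsDiv ε (Measure.map F (fixEntry (fun _ => ν) i a))
          (Measure.map F (fixEntry (fun _ => ν) i b)))
          ⟨1, by rintro x ⟨a, rfl⟩; exact Real.iSup_le (fun b => h1 i a b) zero_le_one⟩ v
    _ ≤ Phi (fun _ => ν) F ε :=
        le_ciSup (f := fun j : Fin k => ⨆ a : W, ⨆ b : W,
          hsDiv ε (Measure.map F (fixEntry (fun _ => ν) j a))
            (Measure.map F (fixEntry (fun _ => ν) j b)))
          ⟨1, by
            rintro x ⟨j, rfl⟩
            exact Real.iSup_le (fun a => Real.iSup_le (fun b => h1 j a b) zero_le_one)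
              zero_le_one⟩ i

lemma measurable_SAMP {W : Type*} [MeasurableSpace W] {n m : ℕ} (τ : Fin m → Fin n) :
    Measurable (SAMP (W := W) τ) :=
  measurable_pi_lambda _ fun i => measurable_pi_apply (τ i)

open Classical in
lemma map_SAMP {W : Type*} [MeasurableSpace W] {n m : ℕ} {τ : Fin m → Fin n}
    (hτ : Function.Injective τ) (P : Fin n → Measure W) [∀ i, IsProbabilityMeasure (P i)] :
    Measure.map (SAMP τ) (Measure.pi P) = Measure.pi (fun i => P (τ i)) := by
  refine (Measure.pi_eq fun s hs => ?_).symm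
  rw [Measure.map_apply (measurable_SAMP τ) (MeasurableSet.univ_pi hs)]
  set t : Fin n → Set W := fun k => if h : ∃ i, τ i = k then s h.choose else Set.univ with ht
  have htτ : ∀ i, t (τ i) = s i := by
    intro i
    have h : ∃ i', τ i' = τ i := ⟨i, rfl⟩
    rw [ht]
    simp only [dif_pos h]
    rw [hτ h.choose_spec]
  have hpre : SAMP τ ⁻¹' Set.pi Set.univ s = Set.pi Set.univ t := by
    ext x
    simp only [Set.mem_preimage, Set.mem_pi, Set.mem_univ, forall_true_left, SAMP]
    constructor
    · intro hx k
      rw [ht]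
      by_cases h : ∃ i, τ i = k
      · simp only [dif_pos h]
        have := hx h.choose
        rwa [h.choose_spec] at this
      · simp [dif_neg h]
    · intro hx i
      have := hx (τ i)
      rwa [htτ i] at this
  rw [hpre, Measure.pi_pi]
  have hprod : ∏ k, P k (t k) = ∏ k ∈ Finset.image τ Finset.univ, P k (t k) := by
    refine (Finset.prod_subset (Finset.subset_univ _) ?_).symm
    intro k _ hk
    have h : ¬ ∃ i, τ i = k := by
      intro ⟨i, hi⟩
      exact hk (Finset.mem_image.mpr ⟨i, Finset.mem_univ i, hi⟩)
    rw [ht]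
    simp [dif_neg h]
  rw [hprod, Finset.prod_image (fun a _ b _ h => hτ h)]
  exact Finset.prod_congr rfl fun i _ => by rw [htτ i]

lemma pi_marginal {W : Type*} [MeasurableSpace W] {m' : ℕ} (ν : Measure W)
    [IsProbabilityMeasure ν] (i₀ : Fin (m' + 1)) {T : Set (Fin (m' + 1) → W)}
    (hT : MeasurableSet T) :
    Measure.pi (fun _ : Fin (m' + 1) => ν) T =
      ∫⁻ u, Measure.pi (Function.update (fun _ : Fin (m' + 1) => ν) i₀ (Measure.dirac u)) T ∂ν := by
  set e := MeasurableEquiv.piFinSuccAbove (fun _ : Fin (m' + 1) => W) i₀ with he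
  have hE : MeasurableSet (e.symm ⁻¹' T) := e.symm.measurable hT
  have key : ∀ (P : Fin (m' + 1) → Measure W), (∀ i, IsProbabilityMeasure (P i)) →
      (∀ j : Fin m', P (i₀.succAbove j) = ν) →
      Measure.pi P T = ∫⁻ u, (Measure.pi fun _ : Fin m' => ν) (Prod.mk u ⁻¹' (e.symm ⁻¹' T)) ∂(P i₀) := by
    intro P hP hPν
    haveI := hP
    have h1 : MeasurePreserving e (Measure.pi P)
        ((P i₀).prod (Measure.pi fun j => P (i₀.succAbove j))) :=
      measurePreserving_piFinSuccAbove P i₀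
    have h2 : Measure.pi P T = ((P i₀).prod (Measure.pi fun j => P (i₀.succAbove j))) (e.symm ⁻¹' T) := by
      rw [← h1.map_eq, Measure.map_apply e.measurable (e.symm.measurable hT)]
      congr 1
      ext x
      simp
    have hfam : (fun j => P (i₀.succAbove j)) = fun _ : Fin m' => ν := funext hPν
    rw [h2, hfam, Measure.prod_apply hE]
  have hbase := key (fun _ => ν) (fun _ => inferInstance) (fun _ => rfl)
  rw [hbase]
  refine lintegral_congr fun u => ?_
  have hup : ∀ i, IsProbabilityMeasure ((Function.update (fun _ : Fin (m'+1) => ν) i₀ (Measure.dirac u)) i) := by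
    intro i
    rcases eq_or_ne i i₀ with rfl | h
    · simp only [Function.update_self]; infer_instance
    · simp only [Function.update_of_ne h]; infer_instance
  have hcomp : ∀ j : Fin m', (Function.update (fun _ : Fin (m'+1) => ν) i₀ (Measure.dirac u)) (i₀.succAbove j) = ν :=
    fun j => Function.update_of_ne (Fin.succAbove_ne i₀ j) _ _
  rw [key _ hup hcomp]
  simp only [Function.update_self]
  rw [lintegral_dirac' u]
  exact measurable_measure_prodMk_left hE

open Classical in
lemma card_filter_inj (n m : ℕ) :
    (Finset.univ.filter (fun σ : Fin m → Fin n => Function.Injective σ)).card =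
      n.descFactorial m := by
  rw [← Fintype.card_subtype]
  rw [Fintype.card_congr (Equiv.subtypeInjectiveEquivEmbedding (Fin m) (Fin n))]
  rw [Fintype.card_embedding_eq, Fintype.card_fin, Fintype.card_fin]

open Classical in
lemma card_filter_inj_avoid (n m : ℕ) (j : Fin n) :
    (Finset.univ.filter (fun σ : Fin m → Fin n =>
        Function.Injective σ ∧ j ∉ Set.range σ)).card = (n - 1).descFactorial m := by
  rw [← Fintype.card_subtype]
  let e1 : {σ : Fin m → Fin n // Function.Injective σ ∧ j ∉ Set.range σ} ≃
      {g : Fin m → {k : Fin n // k ≠ j} // Function.Injective g} :=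
    ⟨fun σ => ⟨fun i => ⟨σ.1 i, fun h => σ.2.2 ⟨i, h⟩⟩,
        fun a b h => σ.2.1 (congrArg Subtype.val h)⟩,
     fun g => ⟨fun i => (g.1 i).1,
      ⟨fun a b h => g.2 (Subtype.ext h), by rintro ⟨i, hi⟩; exact (g.1 i).2 hi⟩⟩,
     fun σ => rfl, fun g => rfl⟩
  rw [Fintype.card_congr e1]
  rw [Fintype.card_congr (Equiv.subtypeInjectiveEquivEmbedding (Fin m) {k : Fin n // k ≠ j})]
  rw [Fintype.card_embedding_eq, Fintype.card_fin]
  congr 1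
  have : Fintype.card {k : Fin n // k ≠ j} = n - 1 := by
    have := Fintype.card_subtype_compl (fun k : Fin n => k = j)
    simpa [Fintype.card_subtype_eq] using this
  rw [this]

lemma descFactorial_identity {n m : ℕ} (hn : 0 < n) :
    (n - m) * n.descFactorial m = n * (n - 1).descFactorial m := by
  obtain ⟨n', rfl⟩ : ∃ n', n = n' + 1 := ⟨n - 1, (Nat.succ_pred_eq_of_pos hn).symm⟩
  rw [← Nat.descFactorial_succ, Nat.succ_descFactorial_succ]
  simp

lemma update_const_prob {W : Type*} [MeasurableSpace W] {n : ℕ} (ν : Measure W)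
    [IsProbabilityMeasure ν] (j : Fin n) (u : W) (i : Fin n) :
    IsProbabilityMeasure (Function.update (fun _ : Fin n => ν) j (Measure.dirac u) i) := by
  rcases eq_or_ne i j with rfl | h
  · simp only [Function.update_self]; infer_instance
  · simp only [Function.update_of_ne h]; infer_instance

lemma cross_bound {W A : Type*} [MeasurableSpace W] [MeasurableSpace A] {m : ℕ}
    (ν : Measure W) [IsProbabilityMeasure ν] {F : (Fin m → W) → A} (hF : Measurable F)
    {S : Set A} (hS : MeasurableSet S) (ε : ℝ) (i₀ : Fin m) (v : W) :
    ((Measure.map F (fixEntry (fun _ => ν) i₀ v)) S).toReal -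
      Real.exp ε * ((Measure.map F (Measure.pi fun _ : Fin m => ν)) S).toReal ≤
      Phi (fun _ => ν) F ε := by
  obtain ⟨m', rfl⟩ : ∃ k, m = k + 1 := ⟨m - 1, (Nat.succ_pred_eq_of_pos i₀.pos).symm⟩
  set Φ := Phi (fun _ : Fin (m' + 1) => ν) F ε with hΦ
  set a := ((Measure.map F (fixEntry (fun _ => ν) i₀ v)) S).toReal with ha
  set c := ((Measure.map F (Measure.pi fun _ : Fin (m' + 1) => ν)) S).toReal with hc
  have hc0 : 0 ≤ c := ENNReal.toReal_nonneg
  have hup : ∀ u : W, a - Real.exp ε *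
      ((Measure.map F (fixEntry (fun _ => ν) i₀ u)) S).toReal ≤ Φ := by
    intro u
    haveI := isProbabilityMeasure_fixEntry (fun _ : Fin (m' + 1) => ν) i₀ v
    haveI : IsProbabilityMeasure (Measure.map F (fixEntry (fun _ : Fin (m'+1) => ν) i₀ v)) :=
      Measure.isProbabilityMeasure_map hF.aemeasurable
    exact le_trans (le_hsDiv hS) (hsDiv_le_Phi ν hF ε i₀ v u)
  rcases le_or_gt a Φ with hcase | hcase
  · nlinarith [Real.exp_pos ε]
  · have hkey : ENNReal.ofReal ((a - Φ) / Real.exp ε) ≤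
        Measure.pi (fun _ : Fin (m' + 1) => ν) (F ⁻¹' S) := by
      rw [pi_marginal ν i₀ (hF hS)]
      calc ENNReal.ofReal ((a - Φ) / Real.exp ε)
          = ∫⁻ _, ENNReal.ofReal ((a - Φ) / Real.exp ε) ∂ν := by
            simp [lintegral_const]
        _ ≤ ∫⁻ u, Measure.pi (Function.update (fun _ : Fin (m'+1) => ν) i₀
              (Measure.dirac u)) (F ⁻¹' S) ∂ν := by
            refine lintegral_mono fun u => ?_
            have h1 := hup u
            have h2 : ((Measure.map F (fixEntry (fun _ => ν) i₀ u)) S) =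
                Measure.pi (Function.update (fun _ : Fin (m'+1) => ν) i₀
                  (Measure.dirac u)) (F ⁻¹' S) := by
              rw [Measure.map_apply hF hS]; rfl
            have hfin : Measure.pi (Function.update (fun _ : Fin (m'+1) => ν) i₀
                (Measure.dirac u)) (F ⁻¹' S) ≠ ⊤ := by
              haveI := isProbabilityMeasure_fixEntry (fun _ : Fin (m'+1) => ν) i₀ u
              exact measure_ne_top (fixEntry (fun _ : Fin (m'+1) => ν) i₀ u) _
            refine ENNReal.ofReal_le_of_le_toReal ?_
            rw [← h2] at *
            rw [div_le_iff₀ (Real.exp_pos ε)]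
            linarith
    have hfin : Measure.pi (fun _ : Fin (m' + 1) => ν) (F ⁻¹' S) ≠ ⊤ := measure_ne_top _ _
    have := ENNReal.toReal_mono hfin hkey
    rw [ENNReal.toReal_ofReal (div_nonneg (by linarith) (Real.exp_pos ε).le)] at this
    have hceq : (Measure.pi (fun _ : Fin (m' + 1) => ν) (F ⁻¹' S)).toReal = c := by
      rw [hc, Measure.map_apply hF hS]
    rw [hceq] at this
    rw [div_le_iff₀ (Real.exp_pos ε)] at this
    nlinarith [Real.exp_pos ε]

set_option maxHeartbeats 1000000 in
/-- sampling without replacement from an i.i.d. database achieves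
`(log(1+(m/n)(e^ε−1)), (m/n)·Φ_{μ_m,F}(ε))`-statistical privacy. -/
theorem subsampling_without_replacement_iid
    {W A : Type*} [MeasurableSpace W] [MeasurableSpace A] {n m : ℕ}
    (hn : 0 < n) (hm : m ≤ n)
    (nu0 : Measure W) [IsProbabilityMeasure nu0]
    (F : (Fin m → W) → A) (hF : Measurable F)
    (ε : ℝ) (hε : 0 ≤ ε) (j : Fin n) (v w : W) :
    hsDiv (Real.log (1 + ((m : ℝ) / (n : ℝ)) * (Real.exp ε - 1)))
      (Measure.sum fun τ : Fin m → Fin n =>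
        uniformInj n m τ •
          Measure.map (fun x => F (SAMP τ x)) (fixEntry (fun _ : Fin n => nu0) j v))
      (Measure.sum fun τ : Fin m → Fin n =>
        uniformInj n m τ •
          Measure.map (fun x => F (SAMP τ x)) (fixEntry (fun _ : Fin n => nu0) j w))
      ≤ ((m : ℝ) / (n : ℝ)) * Phi (fun _ : Fin m => nu0) F ε := by
  classical
  have hn' : (0:ℝ) < n := by exact_mod_cast hn
  set q : ℝ := (m : ℝ) / (n : ℝ) with hqdef
  have hq0 : 0 ≤ q := by positivity
  have hq1 : q ≤ 1 := by rw [hqdef, div_le_one hn']; exact_mod_cast hm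
  have hE1 : 1 ≤ Real.exp ε := Real.one_le_exp hε
  have hE0 : (0:ℝ) < Real.exp ε := Real.exp_pos ε
  have he'pos : (0:ℝ) < 1 + q * (Real.exp ε - 1) := by nlinarith
  have hΦ0 : 0 ≤ Phi (fun _ : Fin m => nu0) F ε :=
    Real.iSup_nonneg fun _ => Real.iSup_nonneg fun _ => Real.iSup_nonneg fun _ => hsDiv_nonneg
  refine hsDiv_le_of_forall (mul_nonneg hq0 hΦ0) fun S hS => ?_
  rw [Real.exp_log he'pos]
  -- counting
  have hDpos : 0 < n.descFactorial m :=
    Nat.pos_of_ne_zero fun h => absurd (Nat.descFactorial_eq_zero_iff_lt.mp h) (not_lt.mpr hm)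
  -- weights
  set u : (Fin m → Fin n) → ℝ := fun τ => (uniformInj n m τ).toReal with hu
  have hu0 : ∀ τ, 0 ≤ u τ := fun τ => ENNReal.toReal_nonneg
  have huval : ∀ τ : Fin m → Fin n, Function.Injective τ →
      u τ = ((n.descFactorial m : ℝ))⁻¹ := by
    intro τ hτ
    rw [hu]
    simp only [uniformInj, if_pos hτ]
    rw [card_filter_inj n m, ENNReal.toReal_inv]
    norm_num
  have hzero : ∀ τ : Fin m → Fin n, ¬ Function.Injective τ → u τ = 0 := by
    intro τ hτ
    rw [hu]
    simp only [uniformInj, if_neg hτ, ENNReal.toReal_zero]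
  -- sums over T1 / T0
  have hsplit : ∀ g : (Fin m → Fin n) → ℝ, (∀ τ, ¬ Function.Injective τ → g τ = 0) →
      ∑ τ : Fin m → Fin n, g τ =
        (∑ τ ∈ Finset.univ.filter
            (fun τ : Fin m → Fin n => Function.Injective τ ∧ j ∈ Set.range τ), g τ)
        + ∑ τ ∈ Finset.univ.filter
            (fun τ : Fin m → Fin n => Function.Injective τ ∧ j ∉ Set.range τ), g τ := by
    intro g hg
    have h1 : ∑ τ ∈ Finset.univ.filter (fun τ : Fin m → Fin n => Function.Injective τ), g τ
        = ∑ τ : Fin m → Fin n, g τ :=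
      Finset.sum_filter_of_ne fun τ _ hgτ => by
        by_contra h; exact hgτ (hg τ h)
    rw [← h1, ← Finset.sum_filter_add_sum_filter_not
      (Finset.univ.filter (fun τ : Fin m → Fin n => Function.Injective τ))
      (fun τ => j ∈ Set.range τ) g, Finset.filter_filter, Finset.filter_filter]
  -- cardinalities
  have hcard0 : (Finset.univ.filter
      (fun τ : Fin m → Fin n => Function.Injective τ ∧ j ∉ Set.range τ)).card
      = (n-1).descFactorial m := card_filter_inj_avoid n m j
  have hcardsum : (Finset.univ.filter
        (fun τ : Fin m → Fin n => Function.Injective τ ∧ j ∈ Set.range τ)).card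
      + (Finset.univ.filter
        (fun τ : Fin m → Fin n => Function.Injective τ ∧ j ∉ Set.range τ)).card
      = n.descFactorial m := by
    rw [← card_filter_inj n m, ← Finset.filter_filter, ← Finset.filter_filter]
    exact Finset.card_filter_add_card_filter_not _
  -- real identity
  have hid0 : ((n-1).descFactorial m : ℝ) * ((n.descFactorial m : ℝ))⁻¹ = 1 - q := by
    have hNat : (n - m) * n.descFactorial m = n * (n - 1).descFactorial m :=
      descFactorial_identity hn
    have hR : ((n:ℝ) - m) * (n.descFactorial m : ℝ) = (n:ℝ) * ((n-1).descFactorial m : ℝ) := by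
      have := congrArg (Nat.cast : ℕ → ℝ) hNat
      push_cast [Nat.cast_sub hm] at this
      linarith
    have hDne : (n.descFactorial m : ℝ) ≠ 0 := by positivity
    rw [hqdef]
    field_simp
    nlinarith [hR]
  have hsum0 : ∑ τ ∈ Finset.univ.filter
      (fun τ : Fin m → Fin n => Function.Injective τ ∧ j ∉ Set.range τ), u τ = 1 - q := by
    rw [Finset.sum_congr rfl (fun τ hτ => huval τ (Finset.mem_filter.mp hτ).2.1),
      Finset.sum_const, hcard0, nsmul_eq_mul, hid0]
  have hsum1 : ∑ τ ∈ Finset.univ.filter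
      (fun τ : Fin m → Fin n => Function.Injective τ ∧ j ∈ Set.range τ), u τ = q := by
    rw [Finset.sum_congr rfl (fun τ hτ => huval τ (Finset.mem_filter.mp hτ).2.1),
      Finset.sum_const, nsmul_eq_mul]
    have hcast : ((Finset.univ.filter
        (fun τ : Fin m → Fin n => Function.Injective τ ∧ j ∈ Set.range τ)).card : ℝ)
        = (n.descFactorial m : ℝ) - ((n-1).descFactorial m : ℝ) := by
      have := congrArg (Nat.cast : ℕ → ℝ) hcardsum
      push_cast at this
      rw [hcard0] at this
      push_cast at this
      linarith
    rw [hcast]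
    have hDne : (n.descFactorial m : ℝ) ≠ 0 := by positivity
    have : ((n-1).descFactorial m : ℝ) = (1 - q) * (n.descFactorial m : ℝ) := by
      rw [← hid0]; field_simp
    rw [this]
    field_simp
    ring
  -- abbreviations
  set f : (Fin m → Fin n) → W → ℝ := fun τ x =>
    ((Measure.map (fun y => F (SAMP τ y)) (fixEntry (fun _ : Fin n => nu0) j x)) S).toReal
    with hfdef
  set c : ℝ := ((Measure.map F (Measure.pi fun _ : Fin m => nu0)) S).toReal with hcdef
  set Φr : ℝ := Phi (fun _ : Fin m => nu0) F ε with hΦr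
  -- measure application
  have happ : ∀ x : W, ((Measure.sum fun τ : Fin m → Fin n => uniformInj n m τ •
        Measure.map (fun y => F (SAMP τ y)) (fixEntry (fun _ : Fin n => nu0) j x)) S).toReal
      = ∑ τ : Fin m → Fin n, u τ * f τ x := by
    intro x
    simp only [hfdef]
    haveI : ∀ τ : Fin m → Fin n,
        IsProbabilityMeasure (Measure.map (fun y => F (SAMP τ y))
          (fixEntry (fun _ : Fin n => nu0) j x)) := by
      intro τ
      haveI := isProbabilityMeasure_fixEntry (fun _ : Fin n => nu0) j x
      exact Measure.isProbabilityMeasure_map (hF.comp (measurable_SAMP τ)).aemeasurable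
    rw [Measure.sum_apply _ hS, tsum_fintype, ENNReal.toReal_sum]
    · exact Finset.sum_congr rfl fun τ _ => by
        rw [Measure.smul_apply, smul_eq_mul, ENNReal.toReal_mul]
    · intro τ _
      rw [Measure.smul_apply, smul_eq_mul]
      refine ENNReal.mul_ne_top ?_ (measure_ne_top _ _)
      simp only [uniformInj]
      split_ifs
      · rw [card_filter_inj n m]
        exact ENNReal.inv_ne_top.mpr (by exact_mod_cast hDpos.ne')
      · exact ENNReal.zero_ne_top
  rw [happ v, happ w]
  -- representation lemmas
  have hrep1 : ∀ (τ : Fin m → Fin n), Function.Injective τ → ∀ (i₀ : Fin m), τ i₀ = j →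
      ∀ x : W, Measure.map (fun y => F (SAMP τ y)) (fixEntry (fun _ : Fin n => nu0) j x)
        = Measure.map F (fixEntry (fun _ : Fin m => nu0) i₀ x) := by
    intro τ hτ i₀ hi₀ x
    haveI := update_const_prob (n := n) nu0 j x
    rw [show (fun y : Fin n → W => F (SAMP τ y)) = F ∘ (SAMP τ) from rfl,
      ← Measure.map_map hF (measurable_SAMP τ)]
    unfold fixEntry
    rw [map_SAMP hτ]
    refine congrArg (Measure.map F) (congrArg Measure.pi ?_)
    funext i
    rcases eq_or_ne i i₀ with rfl | hne
    · rw [hi₀, Function.update_self, Function.update_self]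
    · rw [Function.update_of_ne (fun h => hne (hτ (h.trans hi₀.symm))),
        Function.update_of_ne hne]
  have hrep0 : ∀ (τ : Fin m → Fin n), Function.Injective τ → j ∉ Set.range τ →
      ∀ x : W, Measure.map (fun y => F (SAMP τ y)) (fixEntry (fun _ : Fin n => nu0) j x)
        = Measure.map F (Measure.pi fun _ : Fin m => nu0) := by
    intro τ hτ hj x
    haveI := update_const_prob (n := n) nu0 j x
    rw [show (fun y : Fin n → W => F (SAMP τ y)) = F ∘ (SAMP τ) from rfl,
      ← Measure.map_map hF (measurable_SAMP τ)]
    unfold fixEntry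
    rw [map_SAMP hτ]
    refine congrArg (Measure.map F) (congrArg Measure.pi ?_)
    funext i
    rw [Function.update_of_ne (fun h => hj ⟨i, h⟩)]
  -- bounds on T1
  have hbA : ∀ τ ∈ Finset.univ.filter
      (fun τ : Fin m → Fin n => Function.Injective τ ∧ j ∈ Set.range τ),
      f τ v - Real.exp ε * f τ w ≤ Φr := by
    intro τ hτm
    obtain ⟨-, hτ, i₀, hi₀⟩ := Finset.mem_filter.mp hτm
    simp only [hfdef]
    rw [hrep1 τ hτ i₀ hi₀ v, hrep1 τ hτ i₀ hi₀ w]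
    haveI := isProbabilityMeasure_fixEntry (fun _ : Fin m => nu0) i₀ v
    haveI : IsProbabilityMeasure (Measure.map F (fixEntry (fun _ : Fin m => nu0) i₀ v)) :=
      Measure.isProbabilityMeasure_map hF.aemeasurable
    exact le_trans (le_hsDiv hS) (hsDiv_le_Phi nu0 hF ε i₀ v w)
  have hbC : ∀ τ ∈ Finset.univ.filter
      (fun τ : Fin m → Fin n => Function.Injective τ ∧ j ∈ Set.range τ),
      f τ v - Real.exp ε * c ≤ Φr := by
    intro τ hτm
    obtain ⟨-, hτ, i₀, hi₀⟩ := Finset.mem_filter.mp hτm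
    simp only [hfdef, hcdef, hΦr]
    rw [hrep1 τ hτ i₀ hi₀ v]
    exact cross_bound nu0 hF hS ε i₀ v
  have hc0 : ∀ τ ∈ Finset.univ.filter
      (fun τ : Fin m → Fin n => Function.Injective τ ∧ j ∉ Set.range τ),
      ∀ x : W, f τ x = c := by
    intro τ hτm x
    obtain ⟨-, hτ, hj⟩ := Finset.mem_filter.mp hτm
    simp only [hfdef, hcdef]
    rw [hrep0 τ hτ hj x]
  -- split the sums
  have hsv : ∑ τ : Fin m → Fin n, u τ * f τ v =
      (∑ τ ∈ Finset.univ.filter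
        (fun τ : Fin m → Fin n => Function.Injective τ ∧ j ∈ Set.range τ), u τ * f τ v)
      + ∑ τ ∈ Finset.univ.filter
        (fun τ : Fin m → Fin n => Function.Injective τ ∧ j ∉ Set.range τ), u τ * f τ v :=
    hsplit _ (fun τ h => by rw [hzero τ h, zero_mul])
  have hsw : ∑ τ : Fin m → Fin n, u τ * f τ w =
      (∑ τ ∈ Finset.univ.filter
        (fun τ : Fin m → Fin n => Function.Injective τ ∧ j ∈ Set.range τ), u τ * f τ w)
      + ∑ τ ∈ Finset.univ.filter
        (fun τ : Fin m → Fin n => Function.Injective τ ∧ j ∉ Set.range τ), u τ * f τ w :=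
    hsplit _ (fun τ h => by rw [hzero τ h, zero_mul])
  rw [hsv, hsw]
  have hGv : ∑ τ ∈ Finset.univ.filter
      (fun τ : Fin m → Fin n => Function.Injective τ ∧ j ∉ Set.range τ), u τ * f τ v
      = (1 - q) * c := by
    rw [Finset.sum_congr rfl (fun τ hτ => by rw [hc0 τ hτ v]), ← Finset.sum_mul, hsum0]
  have hGw : ∑ τ ∈ Finset.univ.filter
      (fun τ : Fin m → Fin n => Function.Injective τ ∧ j ∉ Set.range τ), u τ * f τ w
      = (1 - q) * c := by
    rw [Finset.sum_congr rfl (fun τ hτ => by rw [hc0 τ hτ w]), ← Finset.sum_mul, hsum0]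
  rw [hGv, hGw]
  set T1 := Finset.univ.filter
    (fun τ : Fin m → Fin n => Function.Injective τ ∧ j ∈ Set.range τ) with hT1
  set Av := ∑ τ ∈ T1, u τ * f τ v with hAv
  set Bw := ∑ τ ∈ T1, u τ * f τ w with hBw
  -- key sum bounds
  have hA_bound : Av - Real.exp ε * Bw ≤ q * Φr := by
    have h1 : ∑ τ ∈ T1, (u τ * f τ v - Real.exp ε * (u τ * f τ w)) ≤ ∑ τ ∈ T1, u τ * Φr :=
      Finset.sum_le_sum fun τ hτ => by nlinarith [hbA τ hτ, hu0 τ]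
    rw [Finset.sum_sub_distrib, ← Finset.mul_sum, ← Finset.sum_mul, hsum1] at h1
    linarith
  have hC_bound : Av - Real.exp ε * (q * c) ≤ q * Φr := by
    have h1 : ∑ τ ∈ T1, (u τ * f τ v - Real.exp ε * (u τ * c)) ≤ ∑ τ ∈ T1, u τ * Φr :=
      Finset.sum_le_sum fun τ hτ => by nlinarith [hbC τ hτ, hu0 τ]
    rw [Finset.sum_sub_distrib, ← Finset.mul_sum, ← Finset.sum_mul, ← Finset.sum_mul, hsum1] at h1
    linarith
  -- final algebra
  set β : ℝ := (1 + q * (Real.exp ε - 1)) / Real.exp ε with hβ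
  have hβ0 : 0 ≤ β := by positivity
  have hβ1 : β ≤ 1 := by rw [hβ, div_le_one hE0]; nlinarith
  have hid : (Av + (1 - q) * c) - (1 + q * (Real.exp ε - 1)) * (Bw + (1 - q) * c)
      = β * (Av - Real.exp ε * Bw) + (1 - β) * (Av - Real.exp ε * (q * c)) := by
    rw [hβ]
    field_simp
    ring
  rw [hid]
  nlinarith [mul_le_mul_of_nonneg_left hA_bound hβ0,
    mul_le_mul_of_nonneg_left hC_bound (by linarith : (0:ℝ) ≤ 1 - β)]

end
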